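/- A nonzero generalized Euclidean distance matrix D has exactly one positive eigenvalue, and that eigenvalue is simple. -/

import Mathlib

/-
The similarity `P * D * Q` with `P = 1 + c • J`, `Q = 1 + d • J` (`J` the all-ones matrix,
`c = (a - b) / (b n)`, `d = (b - a) / (a n)`, so that `P * Q = 1`) turns `D` into the symmetric
matrix `E = a b (diag L 1ᵀ + 1 diag Lᵀ - 2 L) + ((a - b)² tr L / n) J`; this only uses that the
rows and columns of `L` sum to zero. On the hyperplane `1ᵀ y = 0` the quadratic form of `E` is
`-2ab yᵀ L y ≤ 0`, while `1ᵀ E 1 = (a² + b²) n tr L > 0`. A symmetric matrix with a positive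
value of its quadratic form has a positive eigenvalue, and one that is nonpositive on a hyperplane
has at most one: two orthonormal eigenvectors with positive eigenvalues span a plane meeting the
hyperplane nontrivially.
-/

open Matrix Finset

theorem Matrix.charpoly_mul_mul_of_mul_eq_one {n R : Type*} [Fintype n] [DecidableEq n]
    [CommRing R] {P Q : Matrix n n R} (h : P * Q = 1) (A : Matrix n n R) :
    (P * A * Q).charpoly = A.charpoly := by
  rw [charpoly_mul_comm, ← Matrix.mul_assoc, mul_eq_one_comm.mp h, Matrix.one_mul]

theorem Matrix.vecMulVec_mul_vecMulVec_eq_smul {l m k R : Type*} [Fintype m] [CommSemiring R]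
    (u : l → R) (v w : m → R) (x : k → R) :
    vecMulVec u v * vecMulVec w x = (v ⬝ᵥ w) • vecMulVec u x := by
  rw [vecMulVec_mul_vecMulVec, vecMulVec_smul]

theorem Matrix.IsHermitian.transpose_eq_self {n : Type*} {A : Matrix n n ℝ} (hA : A.IsHermitian) :
    Aᵀ = A := by
  simpa [conjTranspose_eq_transpose_of_trivial] using hA.eq

namespace Matrix.IsHermitian

variable {n : Type*} [Fintype n] [DecidableEq n] {A : Matrix n n ℝ} (hA : A.IsHermitian)
include hA

theorem card_filter_roots_charpoly (p : ℝ → Prop) [DecidablePred p] :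
    (A.charpoly.roots.filter p).card = #{i | p (hA.eigenvalues i)} := by
  rw [hA.roots_charpoly_eq_eigenvalues, Multiset.filter_map, Multiset.card_map, Finset.card_def,
    Finset.filter_val]
  rfl

theorem dotProduct_eigenvectorBasis (i j : n) :
    ⇑(hA.eigenvectorBasis i) ⬝ᵥ ⇑(hA.eigenvectorBasis j) = if i = j then 1 else 0 := by
  simpa [EuclideanSpace.inner_eq_star_dotProduct, dotProduct_comm] using
    orthonormal_iff_ite.mp hA.eigenvectorBasis.orthonormal i j

theorem dotProduct_mulVec_eq_sum_eigenvalues (x : n → ℝ) :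
    x ⬝ᵥ A *ᵥ x = ∑ i, hA.eigenvalues i * (⇑(hA.eigenvectorBasis i) ⬝ᵥ x) ^ 2 := by
  have := hA.eigenvectorBasis.sum_inner_mul_inner (WithLp.toLp 2 x) (WithLp.toLp 2 (A *ᵥ x))
  simp only [EuclideanSpace.inner_eq_star_dotProduct, star_trivial] at this
  rw [dotProduct_comm, ← this]
  refine Finset.sum_congr rfl fun i _ => ?_
  rw [dotProduct_comm (A *ᵥ x), dotProduct_mulVec, ← mulVec_transpose, hA.transpose_eq_self,
    mulVec_eigenvectorBasis, smul_dotProduct, smul_eq_mul]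
  ring

theorem exists_eigenvalues_pos_of_dotProduct_mulVec_pos {x : n → ℝ} (hx : 0 < x ⬝ᵥ A *ᵥ x) :
    ∃ i, 0 < hA.eigenvalues i := by
  by_contra! h
  rw [hA.dotProduct_mulVec_eq_sum_eigenvalues] at hx
  exact hx.not_ge <| Finset.sum_nonpos fun i _ =>
    mul_nonpos_of_nonpos_of_nonneg (h i) (sq_nonneg _)

theorem dotProduct_mulVec_smul_add_smul_eigenvectorBasis {i j : n} (hij : i ≠ j) (α β : ℝ) :
    (α • ⇑(hA.eigenvectorBasis i) + β • ⇑(hA.eigenvectorBasis j)) ⬝ᵥ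
        A *ᵥ (α • ⇑(hA.eigenvectorBasis i) + β • ⇑(hA.eigenvectorBasis j)) =
      hA.eigenvalues i * α ^ 2 + hA.eigenvalues j * β ^ 2 := by
  simp [mulVec_add, mulVec_smul, mulVec_eigenvectorBasis, dotProduct_add, add_dotProduct,
    dotProduct_smul, smul_dotProduct, dotProduct_eigenvectorBasis, hij, hij.symm]
  ring

theorem card_eigenvalues_pos_le_one {v : n → ℝ} (hv : ∀ y, v ⬝ᵥ y = 0 → y ⬝ᵥ A *ᵥ y ≤ 0) :
    #{i | 0 < hA.eigenvalues i} ≤ 1 := by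
  refine Finset.card_le_one.mpr fun i hi j hj => ?_
  simp only [Finset.mem_filter, Finset.mem_univ, true_and] at hi hj
  by_contra hij
  set p := v ⬝ᵥ ⇑(hA.eigenvectorBasis i)
  set q := v ⬝ᵥ ⇑(hA.eigenvectorBasis j)
  obtain ⟨α, β, hαβ, hv0⟩ : ∃ α β : ℝ, (α ≠ 0 ∨ β ≠ 0) ∧ α * p + β * q = 0 := by
    by_cases hpq : p = 0 ∧ q = 0
    · exact ⟨1, 0, by simp, by simp [hpq.1]⟩
    · exact ⟨q, -p, by rw [neg_ne_zero]; tauto, by ring⟩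
  have hle := hv (α • ⇑(hA.eigenvectorBasis i) + β • ⇑(hA.eigenvectorBasis j))
    (by simpa [dotProduct_add, dotProduct_smul] using hv0)
  rw [hA.dotProduct_mulVec_smul_add_smul_eigenvectorBasis hij] at hle
  rcases hαβ with hα | hβ
  · have : 0 < α ^ 2 := by positivity
    nlinarith [mul_nonneg hj.le (sq_nonneg β)]
  · have : 0 < β ^ 2 := by positivity
    nlinarith [mul_nonneg hi.le (sq_nonneg α)]

theorem card_eigenvalues_pos_eq_one {v x : n → ℝ}
    (hv : ∀ y, v ⬝ᵥ y = 0 → y ⬝ᵥ A *ᵥ y ≤ 0) (hx : 0 < x ⬝ᵥ A *ᵥ x) :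
    #{i | 0 < hA.eigenvalues i} = 1 := by
  obtain ⟨i, hi⟩ := hA.exists_eigenvalues_pos_of_dotProduct_mulVec_pos hx
  exact (hA.card_eigenvalues_pos_le_one hv).antisymm
    (Finset.card_pos.mpr ⟨i, Finset.mem_filter.mpr ⟨Finset.mem_univ i, hi⟩⟩)

end Matrix.IsHermitian

section GEDM

variable {n : Type*} [Fintype n]

noncomputable def gedm (a b : ℝ) (L : Matrix n n ℝ) : Matrix n n ℝ :=
  a ^ 2 • vecMulVec L.diag 1 + b ^ 2 • vecMulVec 1 L.diag - (2 * a * b) • L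

noncomputable def gedmSymm (a b : ℝ) (L : Matrix n n ℝ) : Matrix n n ℝ :=
  (a * b) • vecMulVec L.diag 1 + (a * b) • vecMulVec 1 L.diag - (2 * a * b) • L +
    ((a - b) ^ 2 * L.trace / Fintype.card n) • vecMulVec 1 1

theorem one_dotProduct_diag (L : Matrix n n ℝ) : 1 ⬝ᵥ L.diag = L.trace :=
  one_dotProduct _

theorem dotProduct_mulVec_gedmSymm (a b : ℝ) (L : Matrix n n ℝ) (y : n → ℝ) :
    y ⬝ᵥ gedmSymm a b L *ᵥ y = 2 * a * b * (y ⬝ᵥ L.diag) * (1 ⬝ᵥ y) -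
      2 * a * b * (y ⬝ᵥ L *ᵥ y) + (a - b) ^ 2 * L.trace / Fintype.card n * (1 ⬝ᵥ y) ^ 2 := by
  simp only [gedmSymm, add_mulVec, sub_mulVec, smul_mulVec, vecMulVec_mulVec, dotProduct_add,
    dotProduct_sub, dotProduct_smul, op_smul_eq_smul, smul_eq_mul]
  rw [dotProduct_comm L.diag y, dotProduct_comm y 1]
  ring

theorem dotProduct_mulVec_gedmSymm_nonpos {a b : ℝ} (hab : 0 ≤ a * b) {L : Matrix n n ℝ}
    (hL : L.PosSemidef) {y : n → ℝ} (hy : 1 ⬝ᵥ y = 0) : y ⬝ᵥ gedmSymm a b L *ᵥ y ≤ 0 := by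
  have hLy : 0 ≤ y ⬝ᵥ L *ᵥ y := by simpa using hL.dotProduct_mulVec_nonneg y
  rw [dotProduct_mulVec_gedmSymm, hy]
  nlinarith [mul_nonneg hab hLy]

theorem one_dotProduct_mulVec_gedmSymm (a b : ℝ) {L : Matrix n n ℝ} (hrow : L *ᵥ 1 = 0) :
    1 ⬝ᵥ gedmSymm a b L *ᵥ 1 = (a ^ 2 + b ^ 2) * Fintype.card n * L.trace := by
  rw [dotProduct_mulVec_gedmSymm, hrow, dotProduct_zero, one_dotProduct_one, one_dotProduct_diag]
  rcases eq_or_ne (Fintype.card n : ℝ) 0 with hn | hn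
  · simp [hn]
  · field_simp
    ring

theorem isHermitian_gedmSymm (a b : ℝ) {L : Matrix n n ℝ} (hL : L.IsHermitian) :
    (gedmSymm a b L).IsHermitian := by
  ext i j
  have hLij : L j i = L i j := by simpa using hL.apply i j
  simp [gedmSymm, hLij]
  ring

variable [DecidableEq n]

theorem one_add_smul_mul_one_add_smul_of_add_add_mul_eq_zero {c d : ℝ}
    (hcd : c + d + Fintype.card n * c * d = 0) :
    (1 + c • vecMulVec 1 1) * (1 + d • vecMulVec 1 1) = (1 : Matrix n n ℝ) := by
  have hJJ : (vecMulVec 1 1 * vecMulVec 1 1 : Matrix n n ℝ) =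
      (Fintype.card n : ℝ) • vecMulVec 1 1 := by
    rw [vecMulVec_mul_vecMulVec_eq_smul, one_dotProduct_one]
  calc _ = 1 + (c + d + Fintype.card n * c * d) • vecMulVec (1 : n → ℝ) 1 := by
        simp only [mul_add, add_mul, one_mul, mul_one, smul_mul_assoc, mul_smul_comm, hJJ,
          smul_smul]
        module
    _ = 1 := by rw [hcd, zero_smul, add_zero]

theorem mul_gedm_mul_eq_gedmSymm {a b : ℝ} (ha : a ≠ 0) (hb : b ≠ 0) {L : Matrix n n ℝ}
    (hrow : L *ᵥ 1 = 0) (hcol : 1 ᵥ* L = 0) (hn : (Fintype.card n : ℝ) ≠ 0) :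
    (1 + ((a - b) / (b * Fintype.card n)) • vecMulVec (1 : n → ℝ) 1) * gedm a b L *
      (1 + ((b - a) / (a * Fintype.card n)) • vecMulVec (1 : n → ℝ) 1) = gedmSymm a b L := by
  have hJJ : (vecMulVec 1 1 * vecMulVec 1 1 : Matrix n n ℝ) =
      (Fintype.card n : ℝ) • vecMulVec 1 1 := by
    rw [vecMulVec_mul_vecMulVec_eq_smul, one_dotProduct_one]
  have hJU : (vecMulVec 1 1 * vecMulVec L.diag 1 : Matrix n n ℝ) = L.trace • vecMulVec 1 1 := by
    rw [vecMulVec_mul_vecMulVec_eq_smul, one_dotProduct_diag]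
  have hUJ : (vecMulVec L.diag 1 * vecMulVec 1 1 : Matrix n n ℝ) =
      (Fintype.card n : ℝ) • vecMulVec L.diag 1 := by
    rw [vecMulVec_mul_vecMulVec_eq_smul, one_dotProduct_one]
  have hJV : (vecMulVec 1 1 * vecMulVec 1 L.diag : Matrix n n ℝ) =
      (Fintype.card n : ℝ) • vecMulVec 1 L.diag := by
    rw [vecMulVec_mul_vecMulVec_eq_smul, one_dotProduct_one]
  have hVJ : (vecMulVec 1 L.diag * vecMulVec 1 1 : Matrix n n ℝ) = L.trace • vecMulVec 1 1 := by
    rw [vecMulVec_mul_vecMulVec_eq_smul, dotProduct_comm, one_dotProduct_diag]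
  have hJL : vecMulVec 1 1 * L = 0 := by rw [vecMulVec_mul, hcol, vecMulVec_zero]
  have hLJ : L * vecMulVec 1 1 = 0 := by rw [mul_vecMulVec, hrow, zero_vecMulVec]
  simp only [gedm, gedmSymm, mul_add, add_mul, mul_sub, sub_mul, one_mul, mul_one, smul_mul_assoc,
    mul_smul_comm, hJJ, hJU, hUJ, hJV, hVJ, hJL, hLJ, smul_smul, smul_zero, zero_mul]
  match_scalars <;> field_simp <;> ring

theorem charpoly_gedm {a b : ℝ} (ha : a ≠ 0) (hb : b ≠ 0) {L : Matrix n n ℝ}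
    (hrow : L *ᵥ 1 = 0) (hcol : 1 ᵥ* L = 0) :
    (gedm a b L).charpoly = (gedmSymm a b L).charpoly := by
  rcases isEmpty_or_nonempty n with _ | _
  · rw [Subsingleton.elim (gedm a b L) (gedmSymm a b L)]
  have hn : (Fintype.card n : ℝ) ≠ 0 := Nat.cast_ne_zero.mpr Fintype.card_ne_zero
  rw [← mul_gedm_mul_eq_gedmSymm ha hb hrow hcol hn, charpoly_mul_mul_of_mul_eq_one]
  apply one_add_smul_mul_one_add_smul_of_add_add_mul_eq_zero
  field_simp
  ring

theorem card_eigenvalues_gedmSymm_pos {a b : ℝ} (hab : 0 < a * b) {L : Matrix n n ℝ}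
    (hL : L.PosSemidef) (hrow : L *ᵥ 1 = 0) (hL0 : L ≠ 0) :
    #{i | 0 < (isHermitian_gedmSymm a b hL.isHermitian).eigenvalues i} = 1 := by
  have htrace : 0 < L.trace :=
    hL.trace_nonneg.lt_of_ne fun h => hL0 (hL.trace_eq_zero_iff.mp h.symm)
  have : Nonempty n := by
    by_contra! hn
    exact htrace.ne' (by simp [trace])
  refine (isHermitian_gedmSymm a b hL.isHermitian).card_eigenvalues_pos_eq_one (v := 1) (x := 1)
    (fun y hy => dotProduct_mulVec_gedmSymm_nonpos hab.le hL hy) ?_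
  rw [one_dotProduct_mulVec_gedmSymm a b hrow]
  have : 0 < a ^ 2 + b ^ 2 := by nlinarith [sq_nonneg (a - b)]
  positivity

end GEDM

/-- A nonzero generalized Euclidean distance matrix has exactly one positive eigenvalue,
counted with algebraic multiplicity (so that eigenvalue is simple). -/
theorem stmt4 (n : ℕ) (L D : Matrix (Fin n) (Fin n) ℝ) (hL : L.PosSemidef)
    (hL1 : L *ᵥ (fun _ => (1 : ℝ)) = 0) (hL0 : L ≠ 0)
    (a b : ℝ) (ha : 0 < a) (hb : 0 < b)
    (hD : ∀ i j, D i j = a ^ 2 * L i i + b ^ 2 * L j j - 2 * a * b * L i j) :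
    (D.charpoly.roots.filter (fun x => 0 < x)).card = 1 := by
  have hDL : D = gedm a b L := by
    ext i j
    simp [gedm, hD]
  have hcol : 1 ᵥ* L = 0 := by
    rw [← mulVec_transpose, hL.isHermitian.transpose_eq_self]
    exact hL1
  rw [hDL, charpoly_gedm ha.ne' hb.ne' hL1 hcol,
    (isHermitian_gedmSymm a b hL.isHermitian).card_filter_roots_charpoly]
  exact card_eigenvalues_gedmSymm_pos (mul_pos ha hb) hL hL1 hL0
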